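/- arXiv:math/0412253 — 3 statements merged into one kernel-verified Lean document; each statement's English description precedes it below -/
import Mathlib

section
/- One has P* ∘ P = ((2d−2)/(2d−1)) U ∘ P + (1/(2d−1)) id_B. -/
open Finset

/-- The index set `I = {−d, …, −1, 1, …, d}`. -/
abbrev Idx (d : ℕ) : Type :=
  {i : ℤ // i ∈ (Finset.Icc (-(d : ℤ)) (d : ℤ)).erase 0}

instance (d : ℕ) : Neg (Idx d) :=
  ⟨fun i => ⟨-i.1, by
    have h := i.2
    simp only [Finset.mem_erase, Finset.mem_Icc] at h ⊢
    omega⟩⟩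

/-- `P* ∘ P = ((2d−2)/(2d−1)) U ∘ P + (1/(2d−1)) id`. -/
theorem Pstar_mul_P
    {d : ℕ} (hd : 1 ≤ d)
    {A : Type*} [AddCommGroup A] [Module ℝ A]
    (σ : Idx d → (A ≃ₗ[ℝ] A))
    (hσ : ∀ i : Idx d, σ (-i) = (σ i).symm)
    (P Pstar U : Module.End ℝ (Idx d → A))
    (hP : ∀ (b : Idx d → A) (i : Idx d),
      P b i = (2 * (d : ℝ) - 1)⁻¹ •
        ∑ j ∈ Finset.univ.filter (fun j : Idx d => j ≠ -i), σ i (b j))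
    (hPstar : ∀ (b : Idx d → A) (i : Idx d),
      Pstar b i = (2 * (d : ℝ) - 1)⁻¹ •
        ∑ j ∈ Finset.univ.filter (fun j : Idx d => j ≠ i), σ j (b (-j)))
    (hU : ∀ (b : Idx d → A) (i : Idx d), U b i = σ i (b (-i))) :
    Pstar * P
      = ((2 * (d : ℝ) - 2) / (2 * (d : ℝ) - 1)) • (U * P)
        + (2 * (d : ℝ) - 1)⁻¹ • (1 : Module.End ℝ (Idx d → A)) := by
  classical
  have hdR : (1:ℝ) ≤ d := by exact_mod_cast hd
  have hne : (2 * (d:ℝ) - 1) ≠ 0 := by nlinarith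
  have hnn : ∀ i : Idx d, -(-i) = i := fun i => Subtype.ext (neg_neg i.1)
  have hcard : Fintype.card (Idx d) = 2 * d := by
    rw [Fintype.card_coe, Finset.card_erase_of_mem, Int.card_Icc]
    · omega
    · simp only [Finset.mem_Icc]
      omega
  apply LinearMap.ext
  intro b
  funext i
  set c : ℝ := (2 * (d:ℝ) - 1)⁻¹ with hc
  set S : A := ∑ k : Idx d, b k with hS
  -- value of P b at -j
  have hPb : ∀ j : Idx d, (P b) (-j) = c • ((σ j).symm (S - b j)) := by
    intro j
    rw [hP b (-j)]
    simp only [hnn, hσ]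
    rw [Finset.filter_ne', Finset.sum_erase_eq_sub (Finset.mem_univ j)]
    rw [map_sub, map_sum]
  have hsum : ∀ j : Idx d, σ j ((P b) (-j)) = c • (S - b j) := by
    intro j
    rw [hPb j, map_smul, LinearEquiv.apply_symm_apply]
  have hcard' : (Finset.univ.filter (fun j : Idx d => j ≠ i)).card = 2 * d - 1 := by
    rw [Finset.filter_ne', Finset.card_erase_of_mem (Finset.mem_univ i),
      Finset.card_univ, hcard]
  -- LHS
  have hL : (Pstar * P) b i = c • ∑ j ∈ Finset.univ.filter (fun j : Idx d => j ≠ i),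
      c • (S - b j) := by
    rw [Module.End.mul_apply, hPstar]
    congr 1
    exact Finset.sum_congr rfl fun j _ => hsum j
  have hR : (U * P) b i = c • (S - b i) := by
    rw [Module.End.mul_apply, hU]
    exact hsum i
  rw [hL]
  show c • ∑ j ∈ Finset.univ.filter (fun j : Idx d => j ≠ i), c • (S - b j)
      = (((2 * (d:ℝ) - 2) / (2 * (d:ℝ) - 1)) • (U * P) + c • (1 : Module.End ℝ (Idx d → A))) b i
  simp only [LinearMap.add_apply, LinearMap.smul_apply, Module.End.one_apply,
    Pi.add_apply, Pi.smul_apply]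
  rw [hR]
  rw [← Finset.smul_sum, Finset.sum_sub_distrib, Finset.sum_const, hcard',
    Finset.filter_ne', Finset.sum_erase_eq_sub (Finset.mem_univ i)]
  have hcast : ((2 * d - 1 : ℕ) : ℝ) = 2 * (d:ℝ) - 1 := by
    have : 1 ≤ 2 * d := by omega
    push_cast [this]
    ring
  rw [← Nat.cast_smul_eq_nsmul ℝ, hcast, ← hS]
  match_scalars
  · rw [hc]; field_simp; ring
  · rw [hc]; field_simp; ring
end

section
/- For every n ≥ 1, one has (P*)ⁿ ∘ Pⁿ = ((2d−2)/(2d−1)) U ∘ P^{2n−1} + (1/(2d−1)) (P*)^{n−1} ∘ P^{n−1}. -/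
open Finset

lemma Idx.nneg {d : ℕ} (j : Idx d) : - -j = j := Subtype.ext (by show -(-(j:ℤ)) = (j:ℤ); ring)

lemma Idx.card (d : ℕ) : Fintype.card (Idx d) = 2 * d := by
  rw [Fintype.card_coe, Finset.card_erase_of_mem (by simp), Int.card_Icc]
  omega

lemma key_sum {d : ℕ} {A : Type*} [AddCommGroup A] (b : Idx d → A) (i : Idx d) :
    ∑ j ∈ Finset.univ.filter (fun j : Idx d => j ≠ i),
      ∑ k ∈ Finset.univ.filter (fun k : Idx d => k ≠ j), b k
    = ((2 * d : ℤ) - 2) • ∑ k ∈ Finset.univ.filter (fun k : Idx d => k ≠ i), b k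
      + ((2 * d : ℤ) - 1) • b i := by
  have hT : ∀ j : Idx d, ∑ k ∈ Finset.univ.filter (fun k : Idx d => k ≠ j), b k
      = (∑ k, b k) - b j := by
    intro j
    rw [Finset.filter_ne', Finset.sum_erase_eq_sub (Finset.mem_univ j)]
  have hcard : (Finset.univ.erase i).card = 2 * d - 1 := by
    rw [Finset.card_erase_of_mem (Finset.mem_univ i), Finset.card_univ, Idx.card]
  have hd1 : 1 ≤ 2 * d := by
    have : 0 < Fintype.card (Idx d) := Fintype.card_pos_iff.mpr ⟨i⟩
    rw [Idx.card] at this; omega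
  calc ∑ j ∈ Finset.univ.filter (fun j : Idx d => j ≠ i),
      ∑ k ∈ Finset.univ.filter (fun k : Idx d => k ≠ j), b k
      = ∑ j ∈ Finset.univ.erase i, ((∑ k, b k) - b j) := by
        rw [Finset.filter_ne']; exact Finset.sum_congr rfl fun j _ => hT j
    _ = (2 * d - 1 : ℕ) • (∑ k, b k) - ∑ j ∈ Finset.univ.erase i, b j := by
        rw [Finset.sum_sub_distrib, Finset.sum_const, hcard]
    _ = ((2 * d : ℤ) - 2) • ∑ k ∈ Finset.univ.filter (fun k : Idx d => k ≠ i), b k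
      + ((2 * d : ℤ) - 1) • b i := by
        rw [Finset.filter_ne', ← Finset.sum_erase_add _ _ (Finset.mem_univ i)]
        have h1 : ((2 * d - 1 : ℕ) : ℤ) = 2 * (d:ℤ) - 1 := by omega
        rw [show (2 * (d:ℤ) - 2) = ((2*d - 1 : ℕ) : ℤ) - 1 by omega, ← h1]
        generalize ∑ j ∈ Finset.univ.erase i, b j = S
        rw [sub_smul, one_smul, smul_add]
        simp only [natCast_zsmul]
        abel

/-- For every `n ≥ 1` (encoded as `n + 1`),
`(P*)ⁿ ∘ Pⁿ = ((2d−2)/(2d−1)) U ∘ P^{2n−1} + (1/(2d−1)) (P*)^{n−1} ∘ P^{n−1}`. -/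
theorem Pstar_pow_mul_P_pow
    {d : ℕ} (hd : 1 ≤ d)
    {A : Type*} [AddCommGroup A] [Module ℝ A]
    (σ : Idx d → (A ≃ₗ[ℝ] A))
    (hσ : ∀ i : Idx d, σ (-i) = (σ i).symm)
    (P Pstar U : Module.End ℝ (Idx d → A))
    (hP : ∀ (b : Idx d → A) (i : Idx d),
      P b i = (2 * (d : ℝ) - 1)⁻¹ •
        ∑ j ∈ Finset.univ.filter (fun j : Idx d => j ≠ -i), σ i (b j))
    (hPstar : ∀ (b : Idx d → A) (i : Idx d),
      Pstar b i = (2 * (d : ℝ) - 1)⁻¹ •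
        ∑ j ∈ Finset.univ.filter (fun j : Idx d => j ≠ i), σ j (b (-j)))
    (hU : ∀ (b : Idx d → A) (i : Idx d), U b i = σ i (b (-i)))
    (n : ℕ) :
    Pstar ^ (n + 1) * P ^ (n + 1)
      = ((2 * (d : ℝ) - 2) / (2 * (d : ℝ) - 1)) • (U * P ^ (2 * n + 1))
        + (2 * (d : ℝ) - 1)⁻¹ • (Pstar ^ n * P ^ n) := by
  have hne : (2 * (d : ℝ) - 1) ≠ 0 := by
    have : (1:ℝ) ≤ d := by exact_mod_cast hd
    nlinarith
  have hinv : ∀ (j : Idx d) (x : A), σ j (σ (-j) x) = x := by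
    intro j x; rw [hσ j]; exact (σ j).apply_symm_apply x
  -- P b (-j) simplified
  have hPneg : ∀ (b : Idx d → A) (j : Idx d), σ j (P b (-j))
      = (2 * (d : ℝ) - 1)⁻¹ • ∑ k ∈ Finset.univ.filter (fun k : Idx d => k ≠ j), b k := by
    intro b j
    rw [hP]
    simp only [Idx.nneg, map_smul, map_sum, hinv]
  -- Lemma A : Pstar * U = U * P
  have hA : Pstar * U = U * P := by
    refine LinearMap.ext fun b => funext fun i => ?_
    show Pstar (U b) i = U (P b) i
    rw [hPstar, hU, hPneg]
    congr 1
    refine Finset.sum_congr rfl fun j _ => ?_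
    rw [hU, Idx.nneg, hinv]
  -- Lemma B : Pstar * P = c • (U * P) + c' • 1
  have hB : Pstar * P = ((2 * (d : ℝ) - 2) / (2 * (d : ℝ) - 1)) • (U * P)
      + (2 * (d : ℝ) - 1)⁻¹ • (1 : Module.End ℝ (Idx d → A)) := by
    refine LinearMap.ext fun b => funext fun i => ?_
    show Pstar (P b) i = ((2 * (d : ℝ) - 2) / (2 * (d : ℝ) - 1)) • (U (P b)) i
        + (2 * (d : ℝ) - 1)⁻¹ • b i
    rw [hPstar, hU, hPneg]
    have hstep : ∀ j : Idx d, σ j (P b (-j))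
        = (2 * (d : ℝ) - 1)⁻¹ • ∑ k ∈ Finset.univ.filter (fun k : Idx d => k ≠ j), b k :=
      hPneg b
    rw [Finset.sum_congr rfl fun j _ => hstep j, ← Finset.smul_sum, key_sum]
    have hc : ((2 * (d:ℕ) : ℤ) : ℝ) = 2 * (d:ℝ) := by push_cast; ring
    match_scalars <;> field_simp
  -- powers commutation: Pstar^m * U = U * P^m
  have hA' : ∀ m : ℕ, Pstar ^ m * U = U * P ^ m := by
    intro m
    induction m with
    | zero => simp
    | succ k ih =>
      calc Pstar ^ (k+1) * U = Pstar ^ k * (Pstar * U) := by rw [pow_succ, mul_assoc]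
        _ = Pstar ^ k * U * P := by rw [hA, mul_assoc]
        _ = U * P ^ k * P := by rw [ih]
        _ = U * P ^ (k+1) := by rw [pow_succ, mul_assoc]
  calc Pstar ^ (n+1) * P ^ (n+1)
      = Pstar ^ n * (Pstar * P) * P ^ n := by
        rw [pow_succ, pow_succ']; noncomm_ring
    _ = ((2 * (d : ℝ) - 2) / (2 * (d : ℝ) - 1)) • (Pstar ^ n * (U * P) * P ^ n)
        + (2 * (d : ℝ) - 1)⁻¹ • (Pstar ^ n * P ^ n) := by
        rw [hB]; simp only [mul_add, add_mul, mul_smul_comm, smul_mul_assoc, mul_one]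
    _ = ((2 * (d : ℝ) - 2) / (2 * (d : ℝ) - 1)) • (U * P ^ (2 * n + 1))
        + (2 * (d : ℝ) - 1)⁻¹ • (Pstar ^ n * P ^ n) := by
        congr 1
        rw [show Pstar ^ n * (U * P) * P ^ n = (Pstar ^ n * U) * (P * P ^ n) by noncomm_ring,
          hA', show U * P ^ n * (P * P ^ n) = U * (P ^ n * P ^ (n+1)) by rw [pow_succ']; noncomm_ring,
          ← pow_add, show n + (n+1) = 2*n+1 from by omega]
end

section
/- Assume d ≥ 2. For every n ≥ 1, one has P^{2n−1} = ((2d−1)/(2d−2)) Pⁿ ∘ (P*)ⁿ ∘ U − (1/(2d−2)) P^{n−1} ∘ (P*)^{n−1} ∘ U, and equally P^{2n−1} = ((2d−1)/(2d−2)) U ∘ (P*)ⁿ ∘ Pⁿ − (1/(2d−2)) U ∘ (P*)^{n−1} ∘ P^{n−1}. -/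
/-!
Let `r = 2d − 1`. Conjugation by the involution `U` turns `P` into `P*`, so that
`Pᵐ (P*)ᵐ U = U (P*)ᵐ Pᵐ = Pᵐ U Pᵐ`. A direct computation gives the local relation
`r · P U P = (2d − 2) P + U`, i.e. `P = (r / (2d − 2)) P U P − (2d − 2)⁻¹ U`, and substituting it
for the middle factor of `P^{2n+1} = Pⁿ P Pⁿ` gives both identities.
-/

open Finset

lemma Idx.neg_neg {d : ℕ} (i : Idx d) : - -i = i :=
  Subtype.ext (_root_.neg_neg i.1)

theorem pow_two_mul_add_one_eq_of_eq_smul_sandwich {R M : Type*} [CommSemiring R] [Ring M]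
    [Algebra R M] {p u : M} {α β : R} (h : p = α • (p * u * p) - β • u) (n : ℕ) :
    p ^ (2 * n + 1) = α • (p ^ (n + 1) * u * p ^ (n + 1)) - β • (p ^ n * u * p ^ n) := by
  calc p ^ (2 * n + 1) = p ^ n * p * p ^ n := by rw [← pow_succ, ← pow_add]; ring_nf
    _ = p ^ n * (α • (p * u * p) - β • u) * p ^ n := by rw [← h]
    _ = α • (p ^ (n + 1) * u * p ^ (n + 1)) - β • (p ^ n * u * p ^ n) := by
      simp only [mul_sub, sub_mul, mul_smul_comm, smul_mul_assoc, pow_succ, mul_assoc]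
      rw [pow_mul_comm']

section Operators

variable {d : ℕ} {A : Type*} [AddCommGroup A] [Module ℝ A] (σ : Idx d → (A ≃ₗ[ℝ] A))

def IsNonbacktrackingOp (P : Module.End ℝ (Idx d → A)) : Prop :=
  ∀ (b : Idx d → A) (i : Idx d),
    P b i = (2 * (d : ℝ) - 1)⁻¹ • ∑ j ∈ univ.filter (fun j : Idx d => j ≠ -i), σ i (b j)

def IsDualNonbacktrackingOp (Pstar : Module.End ℝ (Idx d → A)) : Prop :=
  ∀ (b : Idx d → A) (i : Idx d),
    Pstar b i = (2 * (d : ℝ) - 1)⁻¹ • ∑ j ∈ univ.filter (fun j : Idx d => j ≠ i), σ j (b (-j))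

def IsReversalOp (U : Module.End ℝ (Idx d → A)) : Prop :=
  ∀ (b : Idx d → A) (i : Idx d), U b i = σ i (b (-i))

variable {σ} {P Pstar U : Module.End ℝ (Idx d → A)}

lemma U_mul_U (hσ : ∀ i, σ (-i) = (σ i).symm) (hU : IsReversalOp σ U) :
    U * U = 1 := by
  refine LinearMap.ext fun b => funext fun i => ?_
  show U (U b) i = b i
  rw [hU, hU, Idx.neg_neg, hσ, LinearEquiv.apply_symm_apply]

lemma P_mul_U (hP : IsNonbacktrackingOp σ P) (hPstar : IsDualNonbacktrackingOp σ Pstar)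
    (hU : IsReversalOp σ U) : P * U = U * Pstar := by
  refine LinearMap.ext fun b => funext fun i => ?_
  show P (U b) i = U (Pstar b) i
  rw [hP, hU, hPstar, map_smul, map_sum]
  simp only [hU b]

lemma Pstar_pow_eq (hσ : ∀ i, σ (-i) = (σ i).symm) (hP : IsNonbacktrackingOp σ P)
    (hPstar : IsDualNonbacktrackingOp σ Pstar) (hU : IsReversalOp σ U) (m : ℕ) :
    Pstar ^ m = U * P ^ m * U := by
  have hUU := U_mul_U hσ hU
  have hPstar_eq : Pstar = U * P * U := by
    rw [mul_assoc, P_mul_U hP hPstar hU, ← mul_assoc, hUU, one_mul]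
  let u : (Module.End ℝ (Idx d → A))ˣ := ⟨U, U, hUU, hUU⟩
  rw [hPstar_eq]
  exact u.conj_pow P m

lemma P_apply_eq_smul_sub (hP : IsNonbacktrackingOp σ P) (b : Idx d → A) (i : Idx d) :
    P b i = (2 * (d : ℝ) - 1)⁻¹ • σ i (∑ k, b k - b (-i)) := by
  rw [hP, filter_ne', ← map_sum, sum_erase_eq_sub (mem_univ _)]

lemma U_P_apply (hσ : ∀ i, σ (-i) = (σ i).symm) (hP : IsNonbacktrackingOp σ P)
    (hU : IsReversalOp σ U) (b : Idx d → A) (j : Idx d) :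
    U (P b) j = (2 * (d : ℝ) - 1)⁻¹ • (∑ k, b k - b j) := by
  rw [hU, P_apply_eq_smul_sub hP, Idx.neg_neg, hσ, map_smul, LinearEquiv.apply_symm_apply]

lemma P_mul_U_mul_P (hσ : ∀ i, σ (-i) = (σ i).symm) (hP : IsNonbacktrackingOp σ P)
    (hU : IsReversalOp σ U) :
    P * U * P = (2 * (d : ℝ) - 1)⁻¹ • ((2 * (d : ℝ) - 2) • P + U) := by
  have hr : 2 * (d : ℝ) - 1 ≠ 0 := by exact_mod_cast (show (2 * d - 1 : ℤ) ≠ 0 by omega)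
  refine LinearMap.ext fun b => funext fun i => ?_
  show P (U (P b)) i = (2 * (d : ℝ) - 1)⁻¹ • ((2 * (d : ℝ) - 2) • P b i + U b i)
  rw [P_apply_eq_smul_sub hP (U (P b)), P_apply_eq_smul_sub hP b, hU b]
  simp only [U_P_apply hσ hP hU, ← smul_sum, sum_sub_distrib, sum_const, card_univ, Idx.card,
    ← Nat.cast_smul_eq_nsmul ℝ, map_smul, map_sub]
  push_cast
  match_scalars <;> field_simp <;> ring

end Operators

-- The paper's `n ≥ 1` is `n + 1` here.
/-- For `d ≥ 2` and every `n ≥ 1` (encoded as `n + 1`),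
`P^{2n−1} = ((2d−1)/(2d−2)) Pⁿ ∘ (P*)ⁿ ∘ U − (1/(2d−2)) P^{n−1} ∘ (P*)^{n−1} ∘ U`, and equally
`P^{2n−1} = ((2d−1)/(2d−2)) U ∘ (P*)ⁿ ∘ Pⁿ − (1/(2d−2)) U ∘ (P*)^{n−1} ∘ P^{n−1}`. -/
theorem P_odd_pow_eq
    {d : ℕ} (hd : 2 ≤ d)
    {A : Type*} [AddCommGroup A] [Module ℝ A]
    (σ : Idx d → (A ≃ₗ[ℝ] A))
    (hσ : ∀ i : Idx d, σ (-i) = (σ i).symm)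
    (P Pstar U : Module.End ℝ (Idx d → A))
    (hP : ∀ (b : Idx d → A) (i : Idx d),
      P b i = (2 * (d : ℝ) - 1)⁻¹ •
        ∑ j ∈ Finset.univ.filter (fun j : Idx d => j ≠ -i), σ i (b j))
    (hPstar : ∀ (b : Idx d → A) (i : Idx d),
      Pstar b i = (2 * (d : ℝ) - 1)⁻¹ •
        ∑ j ∈ Finset.univ.filter (fun j : Idx d => j ≠ i), σ j (b (-j)))
    (hU : ∀ (b : Idx d → A) (i : Idx d), U b i = σ i (b (-i)))
    (n : ℕ) :
    P ^ (2 * n + 1)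
      = ((2 * (d : ℝ) - 1) / (2 * (d : ℝ) - 2)) • (P ^ (n + 1) * Pstar ^ (n + 1) * U)
        - (2 * (d : ℝ) - 2)⁻¹ • (P ^ n * Pstar ^ n * U)
    ∧ P ^ (2 * n + 1)
      = ((2 * (d : ℝ) - 1) / (2 * (d : ℝ) - 2)) • (U * (Pstar ^ (n + 1) * P ^ (n + 1)))
        - (2 * (d : ℝ) - 2)⁻¹ • (U * (Pstar ^ n * P ^ n)) := by
  have hd' : (2 : ℝ) ≤ d := by exact_mod_cast hd
  have hd1 : (d : ℝ) - 1 ≠ 0 := by linarith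
  have hr : 2 * (d : ℝ) - 1 ≠ 0 := by linarith
  have hsandwich : P = ((2 * (d : ℝ) - 1) / (2 * (d : ℝ) - 2)) • (P * U * P)
      - (2 * (d : ℝ) - 2)⁻¹ • U := by
    rw [P_mul_U_mul_P hσ hP hU, smul_smul, smul_add, smul_smul]
    match_scalars <;> field_simp
    ring
  have hUU := U_mul_U hσ hU
  have hright (m : ℕ) : P ^ m * Pstar ^ m * U = P ^ m * U * P ^ m := by
    rw [Pstar_pow_eq hσ hP hPstar hU]
    simp only [mul_assoc, hUU, mul_one]
  have hleft (m : ℕ) : U * (Pstar ^ m * P ^ m) = P ^ m * U * P ^ m := by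
    rw [Pstar_pow_eq hσ hP hPstar hU]
    simp only [← mul_assoc, hUU, one_mul]
  rw [hright, hright, hleft, hleft, and_self]
  exact pow_two_mul_add_one_eq_of_eq_smul_sandwich hsandwich n
end
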